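/- Let G be a simple graph on a finite vertex set and let S be a set of vertices of G. Then det(G[S]) = 1 over GF(2) if and only if there exists a sequence of pivots φ applicable to G with sup(φ) = S (and in that case φ can moreover be chosen reduced, i.e. with pairwise distinct pivot vertices). -/

import Mathlib

/-!
Let `A` and `B` be the GF(2) adjacency matrices of `G` and of the pivot `G[uv]`. With loops added,
`B + 1` is the rank-two update of `C = A + 1` by its columns at `u` and `v`, and a direct
computation gives an exchange identity: if `z` is `x` with its `u`, `v` coordinates replaced by
those of `A x`, then `B z` is `A x` with its `u`, `v` coordinates replaced by those of `x`.
A principal submatrix `A[X]` is nonsingular iff no nonzero `x` vanishes off `X` while `A x`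
vanishes on `X` (encoded as `X.piecewise (A *ᵥ x) x = 0`); the exchange turns this condition for
`B` and `X` into the one for `A` and `X ∆ {u, v}`, so `det G[uv][X] = det G[X ∆ {u, v}]`.

Hence an applicable pivot sequence carries `det G[∅] = 1` to `det G[sup φ] = 1`. Conversely, if
`det G[S] = 1`, every `u ∈ S` has a neighbour `v ∈ S` (otherwise row `u` vanishes), and pivoting
on `uv` reduces `S` to `S \ {u, v}`, so induction yields a reduced sequence.
-/

set_option linter.unusedSectionVars false

variable {V : Type*} [Fintype V] [DecidableEq V]

/-- Local complementation at a vertex `w`: complement the edges within `N_G(w)`. -/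
def SimpleGraph.localComp (G : SimpleGraph V) (w : V) : SimpleGraph V where
  Adj x y := x ≠ y ∧ Xor' (G.Adj x y) (G.Adj x w ∧ G.Adj y w)
  symm := by
    constructor
    intro x y ⟨hne, hx⟩
    refine ⟨hne.symm, ?_⟩
    have h1 := G.adj_comm x y
    unfold Xor' Xor at hx ⊢
    tauto
  loopless := by constructor; intro x ⟨h, _⟩; exact h rfl

/-- `x ∼_G y` : `x = y` or `{x,y}` is an edge of `G`. -/
def SimpleGraph.nbr (G : SimpleGraph V) (x y : V) : Prop := x = y ∨ G.Adj x y

theorem SimpleGraph.nbr_comm (G : SimpleGraph V) (x y : V) : G.nbr x y ↔ G.nbr y x :=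
  or_congr eq_comm (G.adj_comm x y)

private theorem xor_swap_right (a b c : Prop) : Xor' (Xor' a b) c ↔ Xor' (Xor' a c) b := by
  unfold Xor' Xor; tauto

/-- The pivot `G[uv]` of `G` on an edge `{u,v}`, characterized by
`x ∼_{G[uv]} y ⟺ (x ∼_G y) XOR ((x ∼_G u) ∧ (y ∼_G v)) XOR ((x ∼_G v) ∧ (y ∼_G u))`. -/
def SimpleGraph.pivot (G : SimpleGraph V) (u v : V) : SimpleGraph V where
  Adj x y := x ≠ y ∧
    Xor' (Xor' (G.nbr x y) (G.nbr x u ∧ G.nbr y v)) (G.nbr x v ∧ G.nbr y u)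
  symm := by
    constructor
    intro x y ⟨hne, hx⟩
    refine ⟨hne.symm, ?_⟩
    show Xor' (Xor' (G.nbr y x) (G.nbr y u ∧ G.nbr x v)) (G.nbr y v ∧ G.nbr x u)
    rw [G.nbr_comm y x, and_comm (a := G.nbr y u) (b := G.nbr x v),
      and_comm (a := G.nbr y v) (b := G.nbr x u)]
    exact (xor_swap_right _ _ _).mp hx
  loopless := by constructor; intro x ⟨h, _⟩; exact h rfl

/-- Determinant over GF(2) of the adjacency matrix of the subgraph of `G` induced by `S`. -/
noncomputable def gdet (G : SimpleGraph V) (S : Finset V) : ZMod 2 := by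
  classical
  exact Matrix.det (Matrix.of fun i j : S => if G.Adj i j then (1 : ZMod 2) else 0)

/-- Apply a sequence of pivots (left to right). -/
def applyPivots (G : SimpleGraph V) : List (V × V) → SimpleGraph V
  | [] => G
  | p :: φ => applyPivots (G.pivot p.1 p.2) φ

/-- A sequence of pivots is applicable when each pair is an edge of the graph
obtained by applying all preceding pivots. -/
def PivotsApplicable (G : SimpleGraph V) : List (V × V) → Prop
  | [] => True
  | p :: φ => G.Adj p.1 p.2 ∧ PivotsApplicable (G.pivot p.1 p.2) φ

/-- The support of a sequence of pivots: vertices occurring an odd number of times. -/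
def pivotSupport (φ : List (V × V)) : Finset V :=
  Finset.univ.filter fun x => Odd ((φ.flatMap fun p => [p.1, p.2]).count x)

/-- A sequence of pivots is reduced if its pivot vertices are pairwise distinct. -/
def ReducedSeq (φ : List (V × V)) : Prop := (φ.flatMap fun p => [p.1, p.2]).Nodup

/-- The number of perfect matchings of the subgraph of `G` induced by `S`:
sets of edges of `G` inside `S` such that every vertex of `S` lies in exactly one of them. -/
noncomputable def pmCount (G : SimpleGraph V) (S : Finset V) : ℕ := by
  classical
  exact (Finset.univ.filter fun P : Finset (Sym2 V) =>
    (∀ e ∈ P, e ∈ G.edgeSet ∧ ∀ v ∈ e, v ∈ S) ∧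
    ∀ v ∈ S, ∃! e, e ∈ P ∧ v ∈ e).card


open Matrix

theorem Finset.piecewise_piecewise_symmDiff {ι β : Type*} [DecidableEq ι] (s t : Finset ι)
    (f g : ι → β) :
    s.piecewise (t.piecewise f g) (t.piecewise g f) = (symmDiff s t).piecewise g f := by
  ext i
  by_cases hs : i ∈ s <;> by_cases ht : i ∈ t <;> simp [hs, ht, Finset.mem_symmDiff]

theorem Matrix.det_submatrix_ne_zero_iff {ι K : Type*} [Fintype ι] [DecidableEq ι] [CommRing K]
    [IsDomain K] (A : Matrix ι ι K) (X : Finset ι) :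
    (A.submatrix ((↑) : X → ι) (↑)).det ≠ 0 ↔
      ∀ x : ι → K, X.piecewise (A *ᵥ x) x = 0 → x = 0 := by
  have restrict_mulVec : ∀ x : ι → K, (∀ i ∉ X, x i = 0) →
      A.submatrix ((↑) : X → ι) (↑) *ᵥ (fun j : X => x j) = fun i : X => (A *ᵥ x) i := by
    intro x hx
    ext i
    simp only [mulVec, dotProduct, submatrix_apply]
    rw [Finset.sum_coe_sort X (fun j => A i j * x j)]
    exact Finset.sum_subset X.subset_univ fun j _ hj => by rw [hx j hj, mul_zero]
  rw [Ne, ← exists_mulVec_eq_zero_iff, not_exists]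
  constructor
  · intro h x hx
    have hoff : ∀ i ∉ X, x i = 0 := fun i hi => by simpa [hi] using congrFun hx i
    have hon : ∀ i : X, (A *ᵥ x) i = 0 := fun i => by simpa [i.2] using congrFun hx i
    have hres : (fun j : X => x j) = 0 := by
      by_contra hne
      exact h _ ⟨hne, by rw [restrict_mulVec x hoff]; ext i; exact hon i⟩
    ext i
    by_cases hi : i ∈ X
    · exact congrFun hres ⟨i, hi⟩
    · exact hoff i hi
  · rintro h y ⟨hy, hMy⟩
    set x : ι → K := Function.extend Subtype.val y 0
    have hxy : (fun j : X => x j) = y := funext fun j => Subtype.val_injective.extend_apply _ _ j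
    have hoff : ∀ i ∉ X, x i = 0 := fun i hi =>
      Function.extend_apply' _ _ _ fun ⟨j, hj⟩ => hi (hj ▸ j.2)
    refine hy (hxy ▸ congrArg (fun x : ι → K => fun j : X => x j) (h x ?_))
    ext i
    by_cases hi : i ∈ X
    · simpa [hi, hxy, hMy] using (congrFun (restrict_mulVec x hoff) ⟨i, hi⟩).symm
    · simp [hi, hoff i hi]

theorem Matrix.add_vecMulVec_col_mulVec_add_single {ι R : Type*} [Fintype ι] [DecidableEq ι]
    [CommRing R] [CharP R 2]
    {C : Matrix ι ι R} (hC : C.IsSymm) {u v : ι} (huu : C u u = 1) (hvv : C v v = 1)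
    (huv : C u v = 1) (x : ι → R) :
    (C + vecMulVec (C.col u) (C.col v) + vecMulVec (C.col v) (C.col u)) *ᵥ
        (x + Pi.single u ((C *ᵥ x) u) + Pi.single v ((C *ᵥ x) v)) = C *ᵥ x := by
  set a := (C *ᵥ x) u
  set b := (C *ᵥ x) v
  set z := x + Pi.single u a + Pi.single v b
  have hCz : ∀ w, (C *ᵥ z) w = (C *ᵥ x) w + C w u * a + C w v * b := fun w => by
    simp [z, mulVec_add, mulVec_single, mul_comm]
  have hzu : (C *ᵥ z) u = b := by
    rw [hCz, huu, huv]; linear_combination a * CharTwo.two_eq_zero (R := R)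
  have hzv : (C *ᵥ z) v = a := by
    rw [hCz, hvv, hC.apply u v, huv]; linear_combination b * CharTwo.two_eq_zero (R := R)
  have hcol : ∀ w, C.col w ⬝ᵥ z = (C *ᵥ z) w := fun w => by
    rw [col_def, hC.eq]
    rfl
  ext w
  simp only [add_mulVec, vecMulVec_mulVec, hcol, hzu, hzv, Pi.add_apply, Pi.smul_apply,
    MulOpposite.smul_eq_mul_unop, MulOpposite.unop_op, col_apply, hCz]
  linear_combination (C w u * a + C w v * b) * CharTwo.two_eq_zero (R := R)

namespace SimpleGraph

open scoped Classical

variable {R : Type*} [CommRing R] [CharP R 2]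

theorem pivot_nbr_iff (G : SimpleGraph V) (u v x y : V) :
    (G.pivot u v).nbr x y ↔
      Xor' (Xor' (G.nbr x y) (G.nbr x u ∧ G.nbr y v)) (G.nbr x v ∧ G.nbr y u) := by
  by_cases hxy : x = y
  · subst hxy
    simp only [show ∀ H : SimpleGraph V, H.nbr x x from fun _ => Or.inl rfl, true_iff]
    by_cases hu : G.nbr x u <;> by_cases hv : G.nbr x v <;> simp [hu, hv, Xor']
  · simp [nbr, pivot, hxy]

theorem adjMatrix_add_one_apply (G : SimpleGraph V) (x y : V) :
    (G.adjMatrix R + 1) x y = if G.nbr x y then 1 else 0 := by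
  by_cases hxy : x = y
  · subst hxy
    simp [nbr]
  · simp [nbr, hxy, one_apply_ne hxy]

theorem adjMatrix_pivot_add_one (G : SimpleGraph V) (u v : V) :
    (G.pivot u v).adjMatrix R + 1 =
      G.adjMatrix R + 1 + vecMulVec ((G.adjMatrix R + 1).col u) ((G.adjMatrix R + 1).col v)
        + vecMulVec ((G.adjMatrix R + 1).col v) ((G.adjMatrix R + 1).col u) := by
  set C := G.adjMatrix R + 1
  have hC : ∀ a b, C a b = if G.nbr a b then 1 else 0 := adjMatrix_add_one_apply G
  ext x y
  rw [adjMatrix_add_one_apply, pivot_nbr_iff]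
  simp only [Matrix.add_apply, vecMulVec_apply, col_apply, hC]
  by_cases h₁ : G.nbr x y <;> by_cases h₂ : G.nbr x u <;> by_cases h₃ : G.nbr y v <;>
    by_cases h₄ : G.nbr x v <;> by_cases h₅ : G.nbr y u <;>
    simp [h₁, h₂, h₃, h₄, h₅, Xor', CharTwo.add_self_eq_zero]

theorem adjMatrix_pivot_mulVec_piecewise (G : SimpleGraph V) {u v : V} (h : G.Adj u v)
    (x : V → R) :
    (G.pivot u v).adjMatrix R *ᵥ ({u, v} : Finset V).piecewise (G.adjMatrix R *ᵥ x) x =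
      ({u, v} : Finset V).piecewise x (G.adjMatrix R *ᵥ x) := by
  set A := G.adjMatrix R
  set z := ({u, v} : Finset V).piecewise (A *ᵥ x) x
  have hC : (A + 1).IsSymm := G.isSymm_adjMatrix.add isSymm_one
  have hCe : ∀ a b, (A + 1) a b = if G.nbr a b then 1 else 0 := adjMatrix_add_one_apply G
  have hz : z = x + Pi.single u (((A + 1) *ᵥ x) u) + Pi.single v (((A + 1) *ᵥ x) v) := by
    ext w
    by_cases hwu : w = u
    · subst hwu
      simp only [z, Finset.mem_insert, Finset.mem_singleton, h.ne, or_false,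
        Finset.piecewise_eq_of_mem, add_mulVec, one_mulVec, Pi.add_apply, Pi.single_eq_same,
        ne_eq, not_false_eq_true, Pi.single_eq_of_ne, add_zero]
      linear_combination (-x w) * CharTwo.two_eq_zero (R := R)
    by_cases hwv : w = v
    · subst hwv
      simp only [z, Finset.mem_insert, hwu, Finset.mem_singleton, or_true,
        Finset.piecewise_eq_of_mem, add_mulVec, one_mulVec, Pi.add_apply, ne_eq,
        not_false_eq_true, Pi.single_eq_of_ne, add_zero, Pi.single_eq_same]
      linear_combination (-x w) * CharTwo.two_eq_zero (R := R)
    simp [z, hwu, hwv]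
  have key := Matrix.add_vecMulVec_col_mulVec_add_single (u := u) (v := v) hC
    (by simp [hCe, nbr]) (by simp [hCe, nbr]) (by simp [hCe, nbr, h]) x
  rw [← adjMatrix_pivot_add_one, ← hz, add_mulVec, one_mulVec, add_mulVec, one_mulVec] at key
  ext w
  have hw := congrFun key w
  by_cases hP : w ∈ ({u, v} : Finset V)
  · simp only [Pi.add_apply, z, Finset.piecewise_eq_of_mem _ _ _ hP] at hw ⊢
    linear_combination hw
  · simp only [Pi.add_apply, z, Finset.piecewise_eq_of_notMem _ _ _ hP] at hw ⊢
    linear_combination hw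

end SimpleGraph

section

open scoped Classical

theorem gdet_eq_det_submatrix (G : SimpleGraph V) (X : Finset V) :
    gdet G X = ((G.adjMatrix (ZMod 2)).submatrix ((↑) : X → V) (↑)).det :=
  rfl

theorem gdet_empty (G : SimpleGraph V) : gdet G ∅ = 1 := by
  rw [gdet_eq_det_submatrix]
  exact det_isEmpty

theorem gdet_eq_one_iff (G : SimpleGraph V) (X : Finset V) :
    gdet G X = 1 ↔ ∀ x : V → ZMod 2, X.piecewise (G.adjMatrix (ZMod 2) *ᵥ x) x = 0 → x = 0 := by
  rw [gdet_eq_det_submatrix, ← det_submatrix_ne_zero_iff]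
  generalize ((G.adjMatrix (ZMod 2)).submatrix ((↑) : X → V) (↑)).det = d
  revert d
  decide

theorem gdet_pivot_eq_one_iff (G : SimpleGraph V) {u v : V} (h : G.Adj u v) (X : Finset V) :
    gdet (G.pivot u v) X = 1 ↔ gdet G (symmDiff X {u, v}) = 1 := by
  set A := G.adjMatrix (ZMod 2)
  set B := (G.pivot u v).adjMatrix (ZMod 2)
  set e : (V → ZMod 2) → V → ZMod 2 := fun x => ({u, v} : Finset V).piecewise (A *ᵥ x) x
  have hexchange : ∀ x, B *ᵥ e x = ({u, v} : Finset V).piecewise x (A *ᵥ x) :=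
    G.adjMatrix_pivot_mulVec_piecewise h
  have he : e.Bijective := by
    have hinj : e.Injective := Function.LeftInverse.injective
      (g := fun z => ({u, v} : Finset V).piecewise (B *ᵥ z) z) fun x => by
        simp only [hexchange, e, Finset.piecewise_idem_left, Finset.piecewise_idem_right,
          Finset.piecewise_same]
    exact ⟨hinj, Finite.injective_iff_surjective.mp hinj⟩
  have he_eq_zero : ∀ x, e x = 0 ↔ x = 0 := fun x =>
    he.injective.eq_iff' (by simp [e, Finset.piecewise_same])
  rw [gdet_eq_one_iff, gdet_eq_one_iff]
  refine he.surjective.forall.trans (forall_congr' fun x => ?_)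
  rw [hexchange, he_eq_zero, Finset.piecewise_piecewise_symmDiff]

theorem exists_adj_of_gdet_eq_one {G : SimpleGraph V} {S : Finset V} (hS : gdet G S = 1)
    {u : V} (hu : u ∈ S) : ∃ v ∈ S, G.Adj u v := by
  by_contra! hno
  rw [gdet_eq_det_submatrix, det_eq_zero_of_row_eq_zero ⟨u, hu⟩ fun j => by simp [hno j j.2]]
    at hS
  exact zero_ne_one hS

end

theorem pivotSupport_nil : pivotSupport ([] : List (V × V)) = ∅ := by
  simp [pivotSupport]

theorem pivotSupport_cons {u v : V} (huv : u ≠ v) (ψ : List (V × V)) :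
    pivotSupport ((u, v) :: ψ) = symmDiff (pivotSupport ψ) {u, v} := by
  ext w
  by_cases hwu : w = u
  · subst hwu
    simp [pivotSupport, Finset.mem_symmDiff, List.count_cons, huv, huv.symm, Nat.odd_add_one]
  by_cases hwv : w = v
  · subst hwv
    simp [pivotSupport, Finset.mem_symmDiff, List.count_cons, hwu, Ne.symm hwu, Nat.odd_add_one]
  simp [pivotSupport, Finset.mem_symmDiff, List.count_cons, hwu, hwv, Ne.symm hwu, Ne.symm hwv]

theorem ReducedSeq.mem_pivotSupport {ψ : List (V × V)} (hψ : ReducedSeq ψ) {w : V}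
    (hw : w ∈ ψ.flatMap fun p => [p.1, p.2]) : w ∈ pivotSupport ψ := by
  simp [pivotSupport, List.count_eq_one_of_mem hψ hw]

theorem ReducedSeq.cons {u v : V} {ψ : List (V × V)} (hψ : ReducedSeq ψ) (huv : u ≠ v)
    (hu : u ∉ pivotSupport ψ) (hv : v ∉ pivotSupport ψ) : ReducedSeq ((u, v) :: ψ) := by
  simp only [ReducedSeq, List.flatMap_cons, List.cons_append, List.nil_append, List.nodup_cons,
    List.mem_cons, not_or]
  exact ⟨⟨huv, mt hψ.mem_pivotSupport hu⟩, mt hψ.mem_pivotSupport hv, hψ⟩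

theorem gdet_pivotSupport_eq_one {G : SimpleGraph V} {φ : List (V × V)}
    (hφ : PivotsApplicable G φ) : gdet G (pivotSupport φ) = 1 := by
  induction φ generalizing G with
  | nil => rw [pivotSupport_nil]; exact gdet_empty G
  | cons p ψ ih =>
    obtain ⟨h, hψ⟩ := hφ
    rw [pivotSupport_cons h.ne, ← gdet_pivot_eq_one_iff G h]
    exact ih hψ

theorem exists_reduced_applicable_of_gdet_eq_one {G : SimpleGraph V} {S : Finset V}
    (hS : gdet G S = 1) :
    ∃ φ : List (V × V), PivotsApplicable G φ ∧ pivotSupport φ = S ∧ ReducedSeq φ := by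
  induction S using Finset.strongInduction generalizing G with
  | H S ih =>
  obtain rfl | ⟨u, hu⟩ := S.eq_empty_or_nonempty
  · exact ⟨[], trivial, pivotSupport_nil, List.nodup_nil⟩
  obtain ⟨v, hv, huv⟩ := exists_adj_of_gdet_eq_one hS hu
  have hsub : ({u, v} : Finset V) ⊆ S := Finset.insert_subset hu (Finset.singleton_subset_iff.2 hv)
  have hsd : symmDiff S {u, v} = S \ {u, v} := symmDiff_of_ge hsub
  obtain ⟨ψ, happ, hsupp, hred⟩ := ih _ (Finset.sdiff_ssubset hsub (Finset.insert_nonempty _ _))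
    (by rwa [← hsd, gdet_pivot_eq_one_iff G huv, symmDiff_symmDiff_cancel_right])
  refine ⟨(u, v) :: ψ, ⟨huv, happ⟩, ?_, hred.cons huv.ne (by simp [hsupp]) (by simp [hsupp])⟩
  rw [pivotSupport_cons huv.ne, hsupp, ← hsd, symmDiff_symmDiff_cancel_right]

/-- `det(G[S]) = 1` iff there is an applicable (and then even a reduced)
sequence of pivots with support `S`. -/
theorem gdet_eq_one_iff_exists_sequence (G : SimpleGraph V) (S : Finset V) :
    gdet G S = 1 ↔
      ∃ φ : List (V × V), PivotsApplicable G φ ∧ pivotSupport φ = S ∧ ReducedSeq φ :=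
  ⟨exists_reduced_applicable_of_gdet_eq_one, fun ⟨_, hφ, hsupp, _⟩ =>
    hsupp ▸ gdet_pivotSupport_eq_one hφ⟩
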